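/- Let μ₁ and μ₂ be the probability measures on ℝ² defined by μ₁({(k,1)}) = μ₁({(k,−1)}) = 2^{-(k+1)} for k ∈ ℕ₊ and μ₂({(−k,2)}) = μ₂({(−k,−2)}) = 2^{-(k+1)} for k ∈ ℕ₊. Then every line that simultaneously bisects μ₁ and μ₂ is a horizontal line y = c with c ∈ [−1,1], and no such line intersects the support of μ₂. -/

import Mathlib

open MeasureTheory Metric

/-- A point of the Euclidean plane with given coordinates. -/
noncomputable def pt (a b : ℝ) : EuclideanSpace ℝ (Fin 2) :=
  (EuclideanSpace.equiv (Fin 2) ℝ).symm ![a, b]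

/-!
A set containing a point of every pair `{p k, q k}` and both points of one pair has more than half
the mass, the weights being positive with finite sum. Write `u = (a, b)`. If `a > 0`, the open
half-plane `⟪u, x⟫ > c` cannot contain both points of every pair of `μ₁`, which forces
`c ≥ a - |b|`; then `⟪u, x⟫ < c` contains a point of every pair `(-k, ±2)` of `μ₂`, and both
points once `a k > 2 |b| - c`. Replacing `(u, c)` by `(-u, -c)` rules out `a < 0`, so `u = (0, ±1)`,
and since `μ₁` lives on `y = ±1`, bisecting it forces `|c| ≤ 1`, away from the lines `y = ±2`.
-/

open Set ENNReal

section Bisects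

variable {F : Type*} [NormedAddCommGroup F] [InnerProductSpace ℝ F] [MeasurableSpace F]

def Bisects (μ : Measure F) (u : F) (c : ℝ) : Prop :=
  μ {x | c < inner ℝ u x} ≤ μ univ / 2 ∧ μ {x | inner ℝ u x < c} ≤ μ univ / 2

theorem Bisects.neg {μ : Measure F} {u : F} {c : ℝ} (h : Bisects μ u c) : Bisects μ (-u) (-c) := by
  simpa only [Bisects, inner_neg_left, neg_lt_neg_iff] using h.symm

end Bisects

section PairSum

variable {ι X : Type*} [MeasurableSpace X]

noncomputable def pairSum (w : ι → ℝ≥0∞) (p q : ι → X) : Measure X :=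
  Measure.sum fun i => w i • (Measure.dirac (p i) + Measure.dirac (q i))

variable {w : ι → ℝ≥0∞} {p q : ι → X}

theorem pairSum_univ : pairSum w p q univ = (∑' i, w i) * 2 := by
  simp [pairSum, Measure.sum_apply, mul_two, ENNReal.tsum_add]

theorem pairSum_univ_div_two_lt {E : Set X} (hw : ∑' i, w i ≠ ∞) (hE : MeasurableSet E)
    (hone : ∀ i, p i ∈ E ∨ q i ∈ E) {i₀ : ι} (hw₀ : w i₀ ≠ 0) (hboth : p i₀ ∈ E ∧ q i₀ ∈ E) :
    pairSum w p q univ / 2 < pairSum w p q E := by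
  classical
  have hpoint : ∀ i, w i + (if i = i₀ then w i₀ else 0) ≤
      (w i • (Measure.dirac (p i) + Measure.dirac (q i))) E := by
    intro i
    rw [Measure.smul_apply, Measure.add_apply, smul_eq_mul]
    split_ifs with hi
    · subst hi
      rw [Measure.dirac_apply_of_mem hboth.1, Measure.dirac_apply_of_mem hboth.2,
        one_add_one_eq_two, mul_two]
    · rw [add_zero]
      rcases hone i with h | h
      · rw [Measure.dirac_apply_of_mem h]
        exact le_mul_of_one_le_right' le_self_add
      · rw [Measure.dirac_apply_of_mem h]
        exact le_mul_of_one_le_right' le_add_self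
  calc pairSum w p q univ / 2 = ∑' i, w i := by
        rw [pairSum_univ, ENNReal.mul_div_cancel_right two_ne_zero ofNat_ne_top]
    _ < ∑' i, w i + w i₀ := ENNReal.lt_add_right hw hw₀
    _ = ∑' i, (w i + if i = i₀ then w i₀ else 0) := by rw [ENNReal.tsum_add, tsum_ite_eq]
    _ ≤ pairSum w p q E := by
        rw [pairSum, Measure.sum_apply _ hE]
        exact ENNReal.tsum_le_tsum hpoint

end PairSum

section BisectsPairSum

variable {ι F : Type*} [NormedAddCommGroup F] [InnerProductSpace ℝ F] [MeasurableSpace F]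
  [OpensMeasurableSpace F] {w : ι → ℝ≥0∞} {p q : ι → F} {u : F} {c : ℝ}

theorem Bisects.inner_le_of_forall_lt_or (h : Bisects (pairSum w p q) u c)
    (hw : ∑' i, w i ≠ ∞) (hw₀ : ∀ i, w i ≠ 0)
    (hone : ∀ i, c < inner ℝ u (p i) ∨ c < inner ℝ u (q i)) (i : ι) :
    inner ℝ u (p i) ≤ c ∨ inner ℝ u (q i) ≤ c := by
  by_contra! hboth
  have hE : MeasurableSet {x | c < inner ℝ u x} :=
    measurableSet_lt measurable_const (continuous_const.inner continuous_id).measurable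
  exact (pairSum_univ_div_two_lt hw hE hone (hw₀ i) hboth).not_ge h.1

theorem Bisects.exists_inner_le [Nonempty ι] (h : Bisects (pairSum w p q) u c)
    (hw : ∑' i, w i ≠ ∞) (hw₀ : ∀ i, w i ≠ 0) :
    ∃ i, inner ℝ u (p i) ≤ c ∨ inner ℝ u (q i) ≤ c := by
  by_contra! hlt
  obtain ⟨i⟩ := ‹Nonempty ι›
  have hle := h.inner_le_of_forall_lt_or hw hw₀ (fun i => Or.inl (hlt i).1) i
  exact hle.elim (hlt i).1.not_ge (hlt i).2.not_ge

end BisectsPairSum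

noncomputable def dyadicWeight (k : ℕ+) : ℝ≥0∞ := (2 ^ ((k : ℕ) + 1))⁻¹

theorem dyadicWeight_ne_zero (k : ℕ+) : dyadicWeight k ≠ 0 :=
  ENNReal.inv_ne_zero.mpr (pow_ne_top ofNat_ne_top)

theorem tsum_dyadicWeight_ne_top : ∑' k, dyadicWeight k ≠ ∞ := by
  refine ne_top_of_le_ne_top (b := ∑' n : ℕ, 2⁻¹ ^ n) ?_ ?_
  · simp [ENNReal.tsum_geometric, ENNReal.one_sub_inv_two]
  · calc ∑' k, dyadicWeight k ≤ ∑' k : ℕ+, (2⁻¹ : ℝ≥0∞) ^ (k : ℕ) :=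
          ENNReal.tsum_le_tsum fun k => by
            rw [dyadicWeight, ENNReal.inv_pow]
            exact pow_le_pow_of_le_one zero_le (ENNReal.inv_le_one.2 one_le_two) (Nat.le_succ _)
      _ ≤ _ := ENNReal.tsum_comp_le_tsum_of_injective PNat.coe_injective _

@[simp] theorem pt_apply_zero (a b : ℝ) : pt a b 0 = a := rfl
@[simp] theorem pt_apply_one (a b : ℝ) : pt a b 1 = b := rfl

theorem inner_eq_coords (u x : EuclideanSpace ℝ (Fin 2)) : inner ℝ u x = u 0 * x 0 + u 1 * x 1 := by
  simp [PiLp.inner_apply, Fin.sum_univ_two, mul_comm]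

theorem sq_add_sq_eq_norm_sq (u : EuclideanSpace ℝ (Fin 2)) : u 0 ^ 2 + u 1 ^ 2 = ‖u‖ ^ 2 := by
  simp [EuclideanSpace.real_norm_sq_eq, Fin.sum_univ_two]

theorem coord_zero_nonpos_of_bisects {u : EuclideanSpace ℝ (Fin 2)} {c : ℝ}
    (h₁ : Bisects (pairSum dyadicWeight (fun k => pt k 1) (fun k => pt k (-1))) u c)
    (h₂ : Bisects (pairSum dyadicWeight (fun k => pt (-k) 2) (fun k => pt (-k) (-2))) u c) :
    u 0 ≤ 0 := by
  by_contra! ha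
  have hak : ∀ k : ℕ+, u 0 ≤ u 0 * k := fun k =>
    le_mul_of_one_le_right ha.le (Nat.one_le_cast.mpr k.pos)
  obtain ⟨k, hk⟩ := h₁.exists_inner_le tsum_dyadicWeight_ne_top dyadicWeight_ne_zero
  have hc : u 0 - |u 1| ≤ c := by
    simp only [inner_eq_coords, pt_apply_zero, pt_apply_one] at hk
    rcases hk with hk | hk <;> linarith [hak k, le_abs_self (u 1), neg_abs_le (u 1)]
  obtain ⟨n, hn⟩ := exists_nat_gt ((2 * |u 1| - c) / u 0)
  have hone : ∀ k : ℕ+, -c < inner ℝ (-u) (pt (-k) 2) ∨ -c < inner ℝ (-u) (pt (-k) (-2)) := by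
    intro k
    simp only [inner_neg_left, inner_eq_coords, pt_apply_zero, pt_apply_one, neg_lt_neg_iff]
    rcases le_or_gt 0 (u 1) with hb | hb
    · rw [abs_of_nonneg hb] at hc
      right
      linarith [hak k]
    · rw [abs_of_neg hb] at hc
      left
      linarith [hak k]
  have hfar := h₂.neg.inner_le_of_forall_lt_or tsum_dyadicWeight_ne_top dyadicWeight_ne_zero hone
    n.succPNat
  have hn' : 2 * |u 1| - c < u 0 * (n.succPNat : ℕ) := by
    rw [div_lt_iff₀ ha] at hn
    rw [Nat.succPNat_coe, Nat.cast_succ]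
    linarith
  simp only [inner_neg_left, inner_eq_coords, pt_apply_zero, pt_apply_one, neg_le_neg_iff] at hfar
  rcases hfar with h | h <;> linarith [le_abs_self (u 1), neg_abs_le (u 1)]

theorem le_one_of_bisects {u : EuclideanSpace ℝ (Fin 2)} {c : ℝ} (ha : u 0 = 0) (hb : |u 1| ≤ 1)
    (h₁ : Bisects (pairSum dyadicWeight (fun k => pt k 1) (fun k => pt k (-1))) u c) : c ≤ 1 := by
  obtain ⟨k, hk⟩ := h₁.neg.exists_inner_le tsum_dyadicWeight_ne_top dyadicWeight_ne_zero
  simp only [inner_neg_left, inner_eq_coords, ha, pt_apply_one, neg_le_neg_iff] at hk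
  rcases hk with hk | hk <;> linarith [le_abs_self (u 1), neg_abs_le (u 1)]

theorem setOf_inner_eq_of_coord_zero {u : EuclideanSpace ℝ (Fin 2)} (c : ℝ) (ha : u 0 = 0)
    (hb : u 1 ^ 2 = 1) : {x | inner ℝ u x = c} = {x | x 1 = u 1 * c} := by
  ext x
  simp only [Set.mem_ofPred_eq, inner_eq_coords, ha, zero_mul, zero_add]
  constructor <;> intro h
  · linear_combination u 1 * h - x 1 * hb
  · linear_combination u 1 * h + c * hb

/-- Example (non-compact supports): with `μ₁` putting mass `2^{-(k+1)}` at `(k, ±1)` and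
`μ₂` putting mass `2^{-(k+1)}` at `(-k, ±2)` for `k ∈ ℕ₊`, every line simultaneously
bisecting `μ₁` and `μ₂` is a horizontal line `y = c'` with `c' ∈ [-1,1]`, and no such
line meets the support of `μ₂`. -/
theorem example_noncompact_support :
    let μ₁ : Measure (EuclideanSpace ℝ (Fin 2)) :=
      Measure.sum (fun k : ℕ+ =>
        ((2:ENNReal) ^ ((k : ℕ) + 1))⁻¹ •
          (Measure.dirac (pt (k : ℝ) 1) + Measure.dirac (pt (k : ℝ) (-1))))
    let μ₂ : Measure (EuclideanSpace ℝ (Fin 2)) :=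
      Measure.sum (fun k : ℕ+ =>
        ((2:ENNReal) ^ ((k : ℕ) + 1))⁻¹ •
          (Measure.dirac (pt (-(k : ℝ)) 2) + Measure.dirac (pt (-(k : ℝ)) (-2))))
    let S₂ : Set (EuclideanSpace ℝ (Fin 2)) :=
      {x | ∃ k : ℕ+, x = pt (-(k : ℝ)) 2 ∨ x = pt (-(k : ℝ)) (-2)}
    ∀ (u : EuclideanSpace ℝ (Fin 2)) (c : ℝ), ‖u‖ = 1 →
      μ₁ {x | c < (inner ℝ u x : ℝ)} ≤ μ₁ Set.univ / 2 →
      μ₁ {x | (inner ℝ u x : ℝ) < c} ≤ μ₁ Set.univ / 2 →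
      μ₂ {x | c < (inner ℝ u x : ℝ)} ≤ μ₂ Set.univ / 2 →
      μ₂ {x | (inner ℝ u x : ℝ) < c} ≤ μ₂ Set.univ / 2 →
      (∃ c' : ℝ, -1 ≤ c' ∧ c' ≤ 1 ∧
        {x : EuclideanSpace ℝ (Fin 2) | (inner ℝ u x : ℝ) = c} = {x | x 1 = c'}) ∧
      {x : EuclideanSpace ℝ (Fin 2) | (inner ℝ u x : ℝ) = c} ∩ S₂ = ∅ := by
  intro μ₁ μ₂ S₂ u c hu h₁ h₁' h₂ h₂'
  replace h₁ : Bisects μ₁ u c := ⟨h₁, h₁'⟩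
  replace h₂ : Bisects μ₂ u c := ⟨h₂, h₂'⟩
  have ha : u 0 = 0 := le_antisymm (coord_zero_nonpos_of_bisects h₁ h₂)
    (by simpa using coord_zero_nonpos_of_bisects h₁.neg h₂.neg)
  have hb : u 1 ^ 2 = 1 := by simpa [ha, hu] using sq_add_sq_eq_norm_sq u
  have hb' : |u 1| = 1 := (pow_eq_one_iff_of_nonneg (abs_nonneg _) two_ne_zero).1 (by rwa [sq_abs])
  have hc : |u 1 * c| ≤ 1 := by
    rw [abs_mul, hb', one_mul]
    refine abs_le.2 ⟨?_, le_one_of_bisects ha hb'.le h₁⟩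
    linarith [le_one_of_bisects (by simp [ha]) (by simp [hb']) h₁.neg]
  rw [setOf_inner_eq_of_coord_zero c ha hb]
  refine ⟨⟨u 1 * c, (abs_le.1 hc).1, (abs_le.1 hc).2, rfl⟩, ?_⟩
  refine Set.eq_empty_iff_forall_notMem.2 ?_
  rintro x ⟨hx, k, rfl | rfl⟩ <;> simp only [Set.mem_ofPred_eq, pt_apply_one] at hx <;>
    linarith [abs_le.1 hc]
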